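/- arXiv:2103.15249 — 3 statements merged into one kernel-verified Lean document; each statement's English description precedes it below -/
import Mathlib

section
/- For 0 < s < 1 and z > 0, (z/(z+s))^{1−s} ≤ Γ(z+s)/(z^s Γ(z)) ≤ 1. -/
open Real

lemma gamma_log_convex {a b t : ℝ} (ha : 0 < a) (hb : 0 < b) (ht0 : 0 ≤ t) (ht1 : t ≤ 1) :
    Real.Gamma ((1 - t) * a + t * b) ≤ Real.Gamma a ^ (1 - t) * Real.Gamma b ^ t := by
  have h := Real.convexOn_log_Gamma.2 (Set.mem_Ioi.2 ha) (Set.mem_Ioi.2 hb)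
      (by linarith : (0:ℝ) ≤ 1 - t) ht0 (by ring)
  simp only [smul_eq_mul, Function.comp_apply] at h
  have hab : 0 < (1 - t) * a + t * b := by
    rcases eq_or_lt_of_le ht1 with h1 | h1
    · subst h1; simpa using hb
    · have : 0 < (1 - t) * a := mul_pos (by linarith) ha
      nlinarith [mul_nonneg ht0 hb.le]
  have hG : 0 < Real.Gamma ((1 - t) * a + t * b) := Real.Gamma_pos_of_pos hab
  have hGa : 0 < Real.Gamma a := Real.Gamma_pos_of_pos ha
  have hGb : 0 < Real.Gamma b := Real.Gamma_pos_of_pos hb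
  calc Real.Gamma ((1 - t) * a + t * b)
      = Real.exp (Real.log (Real.Gamma ((1 - t) * a + t * b))) := (Real.exp_log hG).symm
    _ ≤ Real.exp ((1 - t) * Real.log (Real.Gamma a) + t * Real.log (Real.Gamma b)) :=
        Real.exp_le_exp.2 h
    _ = Real.Gamma a ^ (1 - t) * Real.Gamma b ^ t := by
        rw [Real.exp_add, Real.rpow_def_of_pos hGa, Real.rpow_def_of_pos hGb,
          mul_comm (1 - t), mul_comm t]

/-- Wendel's double inequality: for `0 < s < 1` and `z > 0`,
`(z/(z+s))^(1−s) ≤ Γ(z+s)/(z^s Γ(z)) ≤ 1`. -/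
theorem wendel_inequality (s z : ℝ) (hs0 : 0 < s) (hs1 : s < 1) (hz : 0 < z) :
    (z / (z + s)) ^ (1 - s) ≤ Real.Gamma (z + s) / (z ^ s * Real.Gamma z) ∧
      Real.Gamma (z + s) / (z ^ s * Real.Gamma z) ≤ 1 := by
  have hzs : 0 < z + s := by linarith
  have hGz : 0 < Real.Gamma z := Real.Gamma_pos_of_pos hz
  have hGzs : 0 < Real.Gamma (z + s) := Real.Gamma_pos_of_pos hzs
  have hzs' : (0:ℝ) < z ^ s := Real.rpow_pos_of_pos hz s
  have hden : 0 < z ^ s * Real.Gamma z := mul_pos hzs' hGz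
  constructor
  · -- lower bound: Γ(z+1) ≤ Γ(z+s+1)^(1-s) * Γ(z+s)^s
    have h := gamma_log_convex (a := z + s + 1) (b := z + s) (t := s)
      (by linarith) hzs hs0.le hs1.le
    have harg : (1 - s) * (z + s + 1) + s * (z + s) = z + 1 := by ring
    rw [harg] at h
    rw [Real.Gamma_add_one hz.ne', Real.Gamma_add_one hzs.ne'] at h
    -- h : z * Γ z ≤ ((z+s) * Γ(z+s))^(1-s) * Γ(z+s)^s
    have hrw : ((z + s) * Real.Gamma (z + s)) ^ (1 - s) * Real.Gamma (z + s) ^ s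
        = (z + s) ^ (1 - s) * Real.Gamma (z + s) := by
      rw [Real.mul_rpow hzs.le hGzs.le, mul_assoc, ← Real.rpow_add hGzs]
      norm_num
    rw [hrw] at h
    rw [Real.div_rpow hz.le hzs.le, div_le_div_iff₀ (by positivity) hden]
    have hz1 : z ^ (1 - s) * (z ^ s * Real.Gamma z) = z * Real.Gamma z := by
      rw [← mul_assoc, ← Real.rpow_add hz]; norm_num
    rw [hz1, mul_comm (Real.Gamma (z + s))]
    exact h
  · -- upper bound: Γ(z+s) ≤ Γ(z)^(1-s) * Γ(z+1)^s = z^s Γ z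
    have h := gamma_log_convex (a := z) (b := z + 1) (t := s)
      hz (by linarith) hs0.le hs1.le
    have harg : (1 - s) * z + s * (z + 1) = z + s := by ring
    rw [harg, Real.Gamma_add_one hz.ne'] at h
    have hrw : Real.Gamma z ^ (1 - s) * (z * Real.Gamma z) ^ s
        = z ^ s * Real.Gamma z := by
      rw [Real.mul_rpow hz.le hGz.le, mul_comm (Real.Gamma z ^ (1-s)), mul_assoc,
        ← Real.rpow_add hGz]
      norm_num
    rw [hrw] at h
    rw [div_le_one hden]
    exact h
end

section
/- For every integer d ≥ 2, 1/(4π²d) ≤ (1/ζ) ∫_0^π ((π/2 − θ)/(2π))² sin^{d−2}θ dθ ≤ 1/(16d), where ζ = √π Γ((d−1)/2)/Γ(d/2). -/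
open Real intervalIntegral

lemma sin_pow_int_eq_gamma (n : ℕ) :
    (∫ θ in (0:ℝ)..π, Real.sin θ ^ n)
      = Real.sqrt π * Real.Gamma (((n:ℝ)+1)/2) / Real.Gamma (((n:ℝ)+2)/2) := by
  have hsπ : Real.sqrt π ≠ 0 := (Real.sqrt_pos.2 Real.pi_pos).ne'
  induction n using Nat.twoStepInduction with
  | zero =>
      rw [show (((0:ℕ):ℝ)+1)/2 = 1/2 by norm_num, show (((0:ℕ):ℝ)+2)/2 = 1 by norm_num,
        Real.Gamma_one, Real.Gamma_one_half_eq]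
      simp [Real.mul_self_sqrt Real.pi_pos.le]
  | one =>
      rw [show (((1:ℕ):ℝ)+1)/2 = 1 by norm_num,
        show (((1:ℕ):ℝ)+2)/2 = 1/2 + 1 by norm_num,
        Real.Gamma_add_one (by norm_num), Real.Gamma_one, Real.Gamma_one_half_eq]
      simp only [pow_one, integral_sin, Real.cos_zero, Real.cos_pi]
      field_simp
      ring
  | more n ih _ =>
      rw [integral_sin_pow]
      simp only [Real.sin_zero, Real.sin_pi]
      rw [zero_pow (by omega : n + 1 ≠ 0), ih]
      have ha : (0:ℝ) < ((n:ℝ)+1)/2 := by positivity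
      have hb : (0:ℝ) < ((n:ℝ)+2)/2 := by positivity
      have e1 : (((n+2:ℕ):ℝ)+1)/2 = ((n:ℝ)+1)/2 + 1 := by push_cast; ring
      have e2 : (((n+2:ℕ):ℝ)+2)/2 = ((n:ℝ)+2)/2 + 1 := by push_cast; ring
      rw [e1, e2, Real.Gamma_add_one ha.ne', Real.Gamma_add_one hb.ne']
      have hGa := Real.Gamma_pos_of_pos ha
      have hGb := Real.Gamma_pos_of_pos hb
      push_cast
      field_simp
      ring

lemma cos_sq_bounds {θ : ℝ} (h0 : 0 ≤ θ) (h1 : θ ≤ π) :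
    Real.cos θ ^ 2 ≤ (π/2 - θ)^2 ∧ (π/2 - θ)^2 ≤ (π/2)^2 * Real.cos θ ^ 2 := by
  have hπ := Real.pi_pos
  rcases le_total θ (π/2) with h | h
  · have hu0 : 0 ≤ π/2 - θ := by linarith
    have hu1 : π/2 - θ ≤ π/2 := by linarith
    have hs : Real.sin (π/2 - θ) = Real.cos θ := Real.sin_pi_div_two_sub θ
    have hle : Real.sin (π/2 - θ) ≤ π/2 - θ := Real.sin_le hu0
    have hge : 2/π * (π/2 - θ) ≤ Real.sin (π/2 - θ) := Real.mul_le_sin hu0 hu1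
    have hsn : 0 ≤ Real.sin (π/2 - θ) :=
      Real.sin_nonneg_of_nonneg_of_le_pi hu0 (by linarith)
    have hge' : π/2 - θ ≤ π/2 * Real.sin (π/2 - θ) := by
      have h2 := mul_le_mul_of_nonneg_left hge (by positivity : (0:ℝ) ≤ π/2)
      calc π/2 - θ = π/2 * (2/π * (π/2 - θ)) := by field_simp
        _ ≤ π/2 * Real.sin (π/2 - θ) := h2
    constructor
    · rw [← hs]; nlinarith
    · rw [← hs]
      have := pow_le_pow_left₀ hu0 hge' 2
      calc (π/2 - θ)^2 ≤ (π/2 * Real.sin (π/2 - θ))^2 := this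
        _ = (π/2)^2 * Real.sin (π/2 - θ)^2 := by ring
  · have hu0 : 0 ≤ θ - π/2 := by linarith
    have hu1 : θ - π/2 ≤ π/2 := by linarith
    have hs : Real.sin (θ - π/2) = -Real.cos θ := Real.sin_sub_pi_div_two θ
    have hle : Real.sin (θ - π/2) ≤ θ - π/2 := Real.sin_le hu0
    have hge : 2/π * (θ - π/2) ≤ Real.sin (θ - π/2) := Real.mul_le_sin hu0 hu1
    have hsn : 0 ≤ Real.sin (θ - π/2) :=
      Real.sin_nonneg_of_nonneg_of_le_pi hu0 (by linarith)
    have hge' : θ - π/2 ≤ π/2 * Real.sin (θ - π/2) := by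
      have h2 := mul_le_mul_of_nonneg_left hge (by positivity : (0:ℝ) ≤ π/2)
      calc θ - π/2 = π/2 * (2/π * (θ - π/2)) := by field_simp
        _ ≤ π/2 * Real.sin (θ - π/2) := h2
    have hc : Real.cos θ ^ 2 = Real.sin (θ - π/2) ^ 2 := by rw [hs]; ring
    have he : (π/2 - θ)^2 = (θ - π/2)^2 := by ring
    constructor
    · rw [hc, he]; nlinarith
    · rw [hc, he]
      have := pow_le_pow_left₀ hu0 hge' 2
      calc (θ - π/2)^2 ≤ (π/2 * Real.sin (θ - π/2))^2 := this
        _ = (π/2)^2 * Real.sin (θ - π/2)^2 := by ring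

/-- For every integer `d ≥ 2`,
`1/(4π²d) ≤ (1/ζ) ∫_0^π ((π/2 − θ)/(2π))² sin^{d−2}θ dθ ≤ 1/(16d)`, where
`ζ = √π Γ((d−1)/2)/Γ(d/2)`. -/
theorem eta_integral_bounds (d : ℕ) (hd : 2 ≤ d) :
    1 / (4 * Real.pi ^ 2 * d) ≤
      (1 / (Real.sqrt Real.pi * Real.Gamma (((d : ℝ) - 1) / 2) / Real.Gamma ((d : ℝ) / 2))) *
        ∫ θ in (0 : ℝ)..Real.pi,
          ((Real.pi / 2 - θ) / (2 * Real.pi)) ^ 2 * Real.sin θ ^ (d - 2) ∧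
    (1 / (Real.sqrt Real.pi * Real.Gamma (((d : ℝ) - 1) / 2) / Real.Gamma ((d : ℝ) / 2))) *
        (∫ θ in (0 : ℝ)..Real.pi,
          ((Real.pi / 2 - θ) / (2 * Real.pi)) ^ 2 * Real.sin θ ^ (d - 2)) ≤
      1 / (16 * d) := by
  obtain ⟨n, rfl⟩ : ∃ n, d = n + 2 := ⟨d - 2, by omega⟩
  have hπ := Real.pi_pos
  simp only [Nat.add_sub_cancel]
  push_cast
  set S : ℝ := ∫ θ in (0:ℝ)..π, Real.sin θ ^ n with hS
  have hSpos : 0 < S := integral_sin_pow_pos n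
  have hzeta : Real.sqrt Real.pi * Real.Gamma (((n:ℝ) + 2 - 1) / 2) /
      Real.Gamma (((n:ℝ) + 2) / 2) = S := by
    rw [show ((n:ℝ) + 2 - 1)/2 = ((n:ℝ)+1)/2 by ring, hS, sin_pow_int_eq_gamma]
  set I : ℝ := ∫ θ in (0:ℝ)..π, (π/2 - θ)^2 * Real.sin θ ^ n with hI
  set K : ℝ := ∫ θ in (0:ℝ)..π, Real.cos θ^2 * Real.sin θ ^ n with hKdef
  have int1 : IntervalIntegrable (fun θ : ℝ => Real.cos θ^2 * Real.sin θ ^ n)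
      MeasureTheory.volume 0 π := (by fun_prop : Continuous _).intervalIntegrable _ _
  have int2 : IntervalIntegrable (fun θ : ℝ => (π/2 - θ)^2 * Real.sin θ ^ n)
      MeasureTheory.volume 0 π := (by fun_prop : Continuous _).intervalIntegrable _ _
  have int3 : IntervalIntegrable (fun θ : ℝ => (π/2)^2 * (Real.cos θ^2 * Real.sin θ ^ n))
      MeasureTheory.volume 0 π := (by fun_prop : Continuous _).intervalIntegrable _ _
  have hJ : (∫ θ in (0:ℝ)..π, ((π/2 - θ)/(2*π))^2 * Real.sin θ ^ n) = I / (2*π)^2 := by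
    rw [hI, ← intervalIntegral.integral_div]
    exact intervalIntegral.integral_congr fun θ _ => by ring
  have hK : K = S / ((n:ℝ) + 2) := by
    have heq : ∀ θ : ℝ, Real.cos θ^2 * Real.sin θ ^ n
        = Real.sin θ ^ n - Real.sin θ ^ (n+2) := fun θ => by
      rw [Real.cos_sq']; ring
    rw [hKdef, intervalIntegral.integral_congr (fun θ _ => heq θ),
      intervalIntegral.integral_sub ((by fun_prop : Continuous _).intervalIntegrable _ _)
        ((by fun_prop : Continuous _).intervalIntegrable _ _),
      integral_sin_pow]
    simp only [Real.sin_zero, Real.sin_pi]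
    rw [zero_pow (by omega : n + 1 ≠ 0), ← hS]
    field_simp
    ring
  have hsin : ∀ θ ∈ Set.Icc (0:ℝ) π, (0:ℝ) ≤ Real.sin θ ^ n := fun θ hθ =>
    pow_nonneg (Real.sin_nonneg_of_nonneg_of_le_pi hθ.1 hθ.2) n
  have hmono1 : K ≤ I :=
    intervalIntegral.integral_mono_on hπ.le int1 int2 fun θ hθ =>
      mul_le_mul_of_nonneg_right (cos_sq_bounds hθ.1 hθ.2).1 (hsin θ hθ)
  have hmono2 : I ≤ (π/2)^2 * K := by
    rw [hKdef, ← intervalIntegral.integral_const_mul]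
    exact intervalIntegral.integral_mono_on hπ.le int2 int3 fun θ hθ => by
      have := (cos_sq_bounds hθ.1 hθ.2).2
      have h2 := mul_le_mul_of_nonneg_right this (hsin θ hθ)
      calc (π/2 - θ)^2 * Real.sin θ ^ n ≤ (π/2)^2 * Real.cos θ^2 * Real.sin θ ^ n := h2
        _ = (π/2)^2 * (Real.cos θ^2 * Real.sin θ ^ n) := by ring
  rw [hzeta, hJ]
  have hn2 : (0:ℝ) < (n:ℝ) + 2 := by positivity
  constructor
  · calc 1 / (4 * π^2 * ((n:ℝ)+2)) = (1/S) * ((S/((n:ℝ)+2)) / (2*π)^2) := by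
          field_simp; ring
      _ ≤ (1/S) * (I / (2*π)^2) := by
          rw [← hK]; gcongr
  · calc (1/S) * (I / (2*π)^2) ≤ (1/S) * (((π/2)^2 * (S/((n:ℝ)+2))) / (2*π)^2) := by
          rw [← hK]; gcongr
      _ = 1 / (16 * ((n:ℝ)+2)) := by field_simp; ring
end

section
/- For any fixed p ∈ (0,1) and dimension d ≥ 1, the total variation distance between the Erdős–Rényi graph G(n,p) and the noisy random geometric graph G(n,p,d,q) is at most (1/2)·n·q, for all 0 ≤ q ≤ 1/2. -/
/-!
By Pinsker's inequality it suffices to bound `KL(G(n,p) ‖ G(n,p,d,q))` by `(n choose 2) q²`.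
The latent points enter `G(n,p,d,q)` only through the random pattern `S` of edges `{i,j}` with
`⟨x_i, x_j⟩ ≥ t`, each of whose coordinates is a Bernoulli(`p`) variable; given `S`, the edges
are independent with probabilities `ρ(S_e)`, `ρ(true) = (1-q)p + q`, `ρ(false) = (1-q)p`.
Since `log` is concave, the KL divergence from `G(n,p)` to this mixture is at most the average over
`S` of the KL divergences to the product measures, which is a sum over the edges of
`p · KL(p ‖ ρ(true)) + (1-p) · KL(p ‖ ρ(false))`; the bound `log (1+x) ≥ x - x²` for
`x ≥ -1/2` shows that each of these terms is at most `q²`.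
-/

open MeasureTheory ProbabilityTheory Real

/-- The uniform probability measure on the unit sphere `S^{d−1} ⊂ ℝ^d`. -/
noncomputable def uniformSphere (d : ℕ) : Measure (Fin d → ℝ) :=
  (Measure.pi fun _ : Fin d => gaussianReal 0 1).map
    fun z => (Real.sqrt (∑ i, z i ^ 2))⁻¹ • z

/-- The Bernoulli measure on `Bool` with success probability `r` (clipped to `[0,1]`). -/
noncomputable def bern (r : ℝ) : Measure Bool :=
  (PMF.bernoulli (min 1 (Real.toNNReal r)) (min_le_left _ _)).toMeasure

/-- Index type for the potential edges of a graph on `n` vertices. -/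
abbrev EdgeIdx (n : ℕ) := {e : Fin n × Fin n // e.1 < e.2}

/-- The Erdős–Rényi random graph `G(n,p)`: each edge appears independently with
probability `p`. -/
noncomputable def erdosRenyi (n : ℕ) (p : ℝ) : Measure (EdgeIdx n → Bool) :=
  Measure.pi fun _ : EdgeIdx n => bern p

/-- The noisy random geometric graph `G(n,p,d,q)`: latent points `x₁, …, xₙ` are i.i.d.
uniform on `S^{d−1}`, and conditionally on them each edge `{i,j}` appears independently
with probability `(1−q)p + q·1{⟨x_i,x_j⟩ ≥ t}`. -/
noncomputable def noisyRGG (n d : ℕ) (p q t : ℝ) : Measure (EdgeIdx n → Bool) :=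
  (Measure.pi fun _ : Fin n => uniformSphere d).bind fun X =>
    Measure.pi fun e : EdgeIdx n =>
      bern ((1 - q) * p + q * (if t ≤ ∑ i, X e.1.1 i * X e.1.2 i then 1 else 0))

/-- The total variation distance `sup_A |P(A) − Q(A)|` between two measures. -/
noncomputable def tvDist {Ω : Type*} [MeasurableSpace Ω] (P Q : Measure Ω) : ℝ :=
  ⨆ A : {A : Set Ω // MeasurableSet A}, |(P A).toReal - (Q A).toReal|

open Finset

lemma sub_sq_le_log_one_add {x : ℝ} (hx : -1 / 2 ≤ x) : x - x ^ 2 ≤ log (1 + x) := by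
  rcases le_or_gt 0 x with hx0 | hx0
  · have h := one_sub_inv_le_log_of_pos (show 0 < 1 + x by linarith)
    have : (1 + x)⁻¹ ≤ 1 - x + x ^ 2 := by
      rw [inv_le_iff_one_le_mul₀' (by linarith)]
      nlinarith [pow_nonneg hx0 3]
    linarith
  · rw [le_log_iff_exp_le (by linarith), ← neg_neg (x - x ^ 2), exp_neg,
      inv_le_iff_one_le_mul₀' (exp_pos _)]
    have h := quadratic_le_exp_of_nonneg (show 0 ≤ -(x - x ^ 2) by nlinarith)
    nlinarith [mul_le_mul_of_nonneg_left h (show 0 ≤ 1 + x by linarith)]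

lemma Finset.mul_log_sum_div_sum_le {ι : Type*} (s : Finset ι) {f h : ι → ℝ}
    (hf : ∀ i ∈ s, 0 < f i) (hh : ∀ i ∈ s, 0 < h i) (hs : s.Nonempty) :
    (∑ i ∈ s, f i) * log ((∑ i ∈ s, f i) / ∑ i ∈ s, h i) ≤ ∑ i ∈ s, f i * log (f i / h i) := by
  set c := (∑ i ∈ s, f i) / ∑ i ∈ s, h i
  have hH : 0 < ∑ i ∈ s, h i := sum_pos hh hs
  have hc : 0 < c := div_pos (sum_pos hf hs) hH
  -- Gibbs: `1 - 1 / x ≤ log x` at `x = f i / (c * h i)`, summed over `s`.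
  have key : ∀ i ∈ s, f i - c * h i ≤ f i * log (f i / h i) - f i * log c := by
    intro i hi
    have hfh := div_pos (hf i hi) (hh i hi)
    have h1 := one_sub_inv_le_log_of_pos (div_pos hfh hc)
    rw [log_div hfh.ne' hc.ne'] at h1
    calc f i - c * h i = f i * (1 - (f i / h i / c)⁻¹) := by
          field_simp [(hf i hi).ne', (hh i hi).ne']
      _ ≤ f i * (log (f i / h i) - log c) := mul_le_mul_of_nonneg_left h1 (hf i hi).le
      _ = _ := mul_sub _ _ _
  have hsum := sum_le_sum key
  rw [sum_sub_distrib, sum_sub_distrib, ← mul_sum, ← sum_mul, div_mul_cancel₀ _ hH.ne',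
    sub_self] at hsum
  linarith

noncomputable def bernoulliKL (a b : ℝ) : ℝ :=
  a * log (a / b) + (1 - a) * log ((1 - a) / (1 - b))

lemma two_mul_sq_sub_le_bernoulliKL {a b : ℝ} (ha : a ∈ Set.Ioo (0 : ℝ) 1)
    (hb : b ∈ Set.Ioo (0 : ℝ) 1) : 2 * (a - b) ^ 2 ≤ bernoulliKL a b := by
  obtain ⟨ha0, ha1⟩ := ha
  obtain ⟨hb0, hb1⟩ := hb
  let g : ℝ → ℝ := fun y => -(a * log y) - (1 - a) * log (1 - y) - 2 * (a - y) ^ 2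
  let g' : ℝ → ℝ := fun y => (y - a) * (1 / (y * (1 - y)) - 4)
  have hg' : ∀ y ∈ Set.Ioo (0 : ℝ) 1, HasDerivAt g (g' y) y := by
    rintro y ⟨hy0, hy1⟩
    have h1 := (hasDerivAt_log hy0.ne').const_mul a
    have h2 := (((hasDerivAt_id' y).const_sub 1).log (by linarith)).const_mul (1 - a)
    have h3 := (((hasDerivAt_id' y).const_sub a).pow 2).const_mul 2
    refine ((h1.neg.sub h2).sub h3).congr_deriv ?_
    simp only [g']
    field_simp [(by linarith : (1 : ℝ) - y ≠ 0)]
    ring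
  have hfac : ∀ y ∈ Set.Ioo (0 : ℝ) 1, 0 ≤ 1 / (y * (1 - y)) - 4 := by
    rintro y ⟨hy0, hy1⟩
    rw [sub_nonneg, le_div_iff₀ (by nlinarith)]
    nlinarith [sq_nonneg (2 * y - 1)]
  -- `g'` has the sign of `y - a`, so `g` is minimal at `a`.
  have hgab : g a ≤ g b := by
    rcases le_total a b with hab | hba
    · have hsub := Set.Icc_subset_Ioo ha0 hb1
      refine monotoneOn_of_hasDerivWithinAt_nonneg (convex_Icc a b)
        (fun y hy => (hg' y (hsub hy)).continuousAt.continuousWithinAt)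
        (fun y hy => (hg' y (hsub (interior_subset hy))).hasDerivWithinAt) (fun y hy => ?_)
        (Set.left_mem_Icc.2 hab) (Set.right_mem_Icc.2 hab) hab
      rw [interior_Icc] at hy
      exact mul_nonneg (by linarith [hy.1]) (hfac y (hsub (Set.Ioo_subset_Icc_self hy)))
    · have hsub := Set.Icc_subset_Ioo hb0 ha1
      refine antitoneOn_of_hasDerivWithinAt_nonpos (convex_Icc b a)
        (fun y hy => (hg' y (hsub hy)).continuousAt.continuousWithinAt)
        (fun y hy => (hg' y (hsub (interior_subset hy))).hasDerivWithinAt) (fun y hy => ?_)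
        (Set.left_mem_Icc.2 hba) (Set.right_mem_Icc.2 hba) hba
      rw [interior_Icc] at hy
      exact mul_nonpos_of_nonpos_of_nonneg (by linarith [hy.2])
        (hfac y (hsub (Set.Ioo_subset_Icc_self hy)))
  have hkl : bernoulliKL a b = g b - g a + 2 * (a - b) ^ 2 := by
    simp only [bernoulliKL, g]
    rw [log_div ha0.ne' hb0.ne', log_div (by linarith) (by linarith)]
    ring
  linarith

lemma bernoulliKL_mixture_le {p q : ℝ} (hp : p ∈ Set.Ioo (0 : ℝ) 1) (hq0 : 0 ≤ q)
    (hq : q ≤ 1 / 2) :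
    p * bernoulliKL p ((1 - q) * p + q) + (1 - p) * bernoulliKL p ((1 - q) * p) ≤ q ^ 2 := by
  obtain ⟨hp0, hp1⟩ := hp
  have hp1' : 0 < 1 - p := by linarith
  -- With `u = q (1 - p) / p` and `v = q p / (1 - p)`, the left side is
  -- `-p² log (1 + u) - (1 - p)² log (1 + v) - 2 p (1 - p) log (1 - q)`.
  have hA1 : (1 - q) * p + q = p * (1 + q * (1 - p) / p) := by field_simp; ring
  have hA1' : 1 - ((1 - q) * p + q) = (1 - p) * (1 + -q) := by ring
  have hA0 : (1 - q) * p = p * (1 + -q) := by ring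
  have hA0' : 1 - (1 - q) * p = (1 - p) * (1 + q * p / (1 - p)) := by field_simp; ring
  rw [bernoulliKL, bernoulliKL, hA1', hA1, hA0', hA0]
  simp only [div_mul_cancel_left₀ hp0.ne', div_mul_cancel_left₀ hp1'.ne', log_inv]
  have hu := sub_sq_le_log_one_add (x := q * (1 - p) / p)
    (by linarith [show 0 ≤ q * (1 - p) / p by positivity])
  have hv := sub_sq_le_log_one_add (x := q * p / (1 - p))
    (by linarith [show 0 ≤ q * p / (1 - p) by positivity])
  have hq' := sub_sq_le_log_one_add (x := -q) (by linarith)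
  have eu : p ^ 2 * (q * (1 - p) / p - (q * (1 - p) / p) ^ 2)
      = p * q * (1 - p) - (q * (1 - p)) ^ 2 := by field_simp
  have ev : (1 - p) ^ 2 * (q * p / (1 - p) - (q * p / (1 - p)) ^ 2)
      = p * q * (1 - p) - (q * p) ^ 2 := by field_simp
  nlinarith [mul_le_mul_of_nonneg_left hu (sq_nonneg p),
    mul_le_mul_of_nonneg_left hv (sq_nonneg (1 - p)),
    mul_le_mul_of_nonneg_left hq' (mul_pos hp0 hp1').le]

lemma integral_pos_of_forall_pos {α : Type*} [MeasurableSpace α] (μ : Measure α) [NeZero μ]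
    {w : α → ℝ} (hw : ∀ x, 0 < w x) (hwi : Integrable w μ) : 0 < ∫ x, w x ∂μ := by
  rw [integral_pos_iff_support_of_nonneg (fun x => (hw x).le) hwi,
    Function.support_eq_univ fun x => (hw x).ne']
  exact Measure.measure_univ_pos.2 (NeZero.ne μ)

lemma integral_log_le_log_integral {α : Type*} [MeasurableSpace α] (μ : Measure α)
    [IsProbabilityMeasure μ] {w : α → ℝ} (hw : ∀ x, 0 < w x) (hwi : Integrable w μ)
    (hlog : Integrable (fun x => log (w x)) μ) :
    ∫ x, log (w x) ∂μ ≤ log (∫ x, w x ∂μ) := by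
  set H := ∫ x, w x ∂μ
  have hH : 0 < H := integral_pos_of_forall_pos μ hw hwi
  have hle : ∀ x, log (w x) ≤ w x / H - 1 + log H := fun x => by
    have := log_le_sub_one_of_pos (div_pos (hw x) hH)
    rw [log_div (hw x).ne' hH.ne'] at this
    linarith
  have hint : Integrable (fun x => w x / H - 1) μ := (hwi.div_const H).sub (integrable_const 1)
  calc ∫ x, log (w x) ∂μ ≤ ∫ x, (w x / H - 1 + log H) ∂μ :=
        integral_mono hlog (hint.add (integrable_const _)) hle
    _ = log H := by
        rw [integral_add hint (integrable_const _),
          integral_sub (hwi.div_const H) (integrable_const 1), integral_div]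
        simp [H, hH.ne']

lemma measureReal_pi_singleton {ι : Type*} [Fintype ι] {α : ι → Type*}
    [∀ i, MeasurableSpace (α i)] [∀ i, MeasurableSingletonClass (α i)]
    (μ : ∀ i, Measure (α i)) [∀ i, SigmaFinite (μ i)] (g : ∀ i, α i) :
    (Measure.pi μ).real {g} = ∏ i, (μ i).real {g i} := by
  rw [measureReal_def, Measure.pi_singleton, ENNReal.toReal_prod]
  rfl

lemma measureReal_bind_singleton {Ω Λ : Type*} [MeasurableSpace Ω] [MeasurableSingletonClass Ω]
    [MeasurableSpace Λ] [DiscreteMeasurableSpace Λ] (ν : Measure Λ) (κ : Λ → Measure Ω)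
    [∀ θ, IsProbabilityMeasure (κ θ)] (ω : Ω) :
    (ν.bind κ).real {ω} = ∫ θ, (κ θ).real {ω} ∂ν := by
  rw [measureReal_def, Measure.bind_apply (measurableSet_singleton ω)
    Measurable.of_discrete.aemeasurable]
  exact (integral_toReal Measurable.of_discrete.aemeasurable
    (ae_of_all _ fun θ => measure_lt_top _ _)).symm

lemma measureReal_bind_singleton_pos {Ω Λ : Type*} [MeasurableSpace Ω]
    [MeasurableSingletonClass Ω] [Finite Λ] [MeasurableSpace Λ] [DiscreteMeasurableSpace Λ]
    (ν : Measure Λ) [IsProbabilityMeasure ν] (κ : Λ → Measure Ω)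
    [∀ θ, IsProbabilityMeasure (κ θ)] {ω : Ω} (hκ : ∀ θ, 0 < (κ θ).real {ω}) :
    0 < (ν.bind κ).real {ω} := by
  rw [measureReal_bind_singleton]
  exact integral_pos_of_forall_pos ν hκ Integrable.of_finite

lemma Measure.bind_map_eq {α β γ : Type*} [MeasurableSpace α] [MeasurableSpace β]
    [MeasurableSpace γ] (μ : Measure α) {f : α → β} (hf : Measurable f) {κ : β → Measure γ}
    (hκ : Measurable κ) : (μ.map f).bind κ = μ.bind (κ ∘ f) := by
  ext s hs
  rw [Measure.bind_apply hs hκ.aemeasurable,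
    lintegral_map (f := fun b => κ b s) ((Measure.measurable_coe hs).comp hκ) hf,
    Measure.bind_apply hs (hκ.comp hf).aemeasurable]
  rfl

lemma Measure.map_pi_pair_eq_prod {ι α : Type*} [Fintype ι] [MeasurableSpace α]
    (μ : Measure α) [IsProbabilityMeasure μ] {i j : ι} (hij : i ≠ j) :
    (Measure.pi fun _ : ι => μ).map (fun X => (X i, X j)) = μ.prod μ := by
  have hind := (iIndepFun_pi (μ := fun _ : ι => μ) (X := fun _ => id)
    fun _ => aemeasurable_id).indepFun hij
  rw [hind.map_prod_eq_prod_map_map (measurable_pi_apply i).aemeasurable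
    (measurable_pi_apply j).aemeasurable, (measurePreserving_eval _ i).map_eq,
    (measurePreserving_eval _ j).map_eq]

lemma measurable_decide {α : Type*} [MeasurableSpace α] {P : α → Prop} [DecidablePred P]
    (hP : MeasurableSet {x | P x}) : Measurable fun x => decide (P x) :=
  measurable_to_bool (by convert hP; ext; simp)

section DiscreteKL

variable {Ω : Type*} [Fintype Ω] [MeasurableSpace Ω] [MeasurableSingletonClass Ω]

noncomputable def discreteKL (P Q : Measure Ω) : ℝ :=
  ∑ ω, P.real {ω} * log (P.real {ω} / Q.real {ω})

lemma two_mul_sq_measureReal_sub_le_discreteKL (P Q : Measure Ω) [IsProbabilityMeasure P]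
    [IsProbabilityMeasure Q] (hP : ∀ ω, 0 < P.real {ω}) (hQ : ∀ ω, 0 < Q.real {ω})
    (A : Set Ω) : 2 * (P.real A - Q.real A) ^ 2 ≤ discreteKL P Q := by
  classical
  have := nonempty_of_isProbabilityMeasure P
  have hone : ∀ (μ : Measure Ω) [IsProbabilityMeasure μ], ∑ ω, μ.real {ω} = 1 := by
    intro μ _
    rw [sum_measureReal_singleton, coe_univ, probReal_univ]
  have hcompl : ∀ (μ : Measure Ω) [IsProbabilityMeasure μ] (s : Finset Ω),
      ∑ ω ∈ sᶜ, μ.real {ω} = 1 - ∑ ω ∈ s, μ.real {ω} := by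
    intro μ _ s
    rw [eq_sub_iff_add_eq', sum_add_sum_compl, hone]
  have hlogsum := fun s => Finset.mul_log_sum_div_sum_le s (fun ω _ => hP ω) (fun ω _ => hQ ω)
  have hKL : 0 ≤ discreteKL P Q := by
    simpa [discreteKL, hone] using hlogsum univ univ_nonempty
  obtain ⟨s, rfl⟩ : ∃ s : Finset Ω, (s : Set Ω) = A := ⟨A.toFinset, Set.coe_toFinset A⟩
  rw [← sum_measureReal_singleton, ← sum_measureReal_singleton]
  rcases s.eq_empty_or_nonempty with rfl | hs
  · simpa using hKL
  rcases sᶜ.eq_empty_or_nonempty with hsc | hsc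
  · rw [compl_eq_empty_iff] at hsc
    subst hsc
    simpa [hone] using hKL
  -- Split the divergence along `s` and `sᶜ` and apply the log-sum inequality to each part.
  set a := ∑ ω ∈ s, P.real {ω}
  set b := ∑ ω ∈ s, Q.real {ω}
  have ha : a ∈ Set.Ioo (0 : ℝ) 1 :=
    ⟨sum_pos (fun ω _ => hP ω) hs, by linarith [hcompl P s, sum_pos (fun ω _ => hP ω) hsc]⟩
  have hb : b ∈ Set.Ioo (0 : ℝ) 1 :=
    ⟨sum_pos (fun ω _ => hQ ω) hs, by linarith [hcompl Q s, sum_pos (fun ω _ => hQ ω) hsc]⟩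
  have hin := hlogsum s hs
  have hout := hlogsum sᶜ hsc
  rw [hcompl P, hcompl Q] at hout
  have := two_mul_sq_sub_le_bernoulliKL ha hb
  unfold discreteKL
  rw [← sum_add_sum_compl s]
  unfold bernoulliKL at this
  linarith

lemma tvDist_le_sqrt_discreteKL (P Q : Measure Ω) [IsProbabilityMeasure P]
    [IsProbabilityMeasure Q] (hP : ∀ ω, 0 < P.real {ω}) (hQ : ∀ ω, 0 < Q.real {ω}) :
    tvDist P Q ≤ √(discreteKL P Q / 2) :=
  ciSup_le fun A => abs_le_sqrt <| by
    have := two_mul_sq_measureReal_sub_le_discreteKL P Q hP hQ A.1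
    rw [measureReal_def, measureReal_def] at this
    linarith

lemma discreteKL_bind_le {Λ : Type*} [Finite Λ] [MeasurableSpace Λ] [DiscreteMeasurableSpace Λ]
    (P : Measure Ω) (ν : Measure Λ) [IsProbabilityMeasure ν] (κ : Λ → Measure Ω)
    [∀ θ, IsProbabilityMeasure (κ θ)] (hP : ∀ ω, 0 < P.real {ω})
    (hκ : ∀ θ ω, 0 < (κ θ).real {ω}) :
    discreteKL P (ν.bind κ) ≤ ∫ θ, discreteKL P (κ θ) ∂ν := by
  unfold discreteKL
  rw [integral_finsetSum _ fun ω _ => Integrable.of_finite]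
  refine sum_le_sum fun ω _ => ?_
  have hpos := measureReal_bind_singleton_pos ν κ fun θ => hκ θ ω
  have hjensen := integral_log_le_log_integral ν (fun θ => hκ θ ω) Integrable.of_finite
    Integrable.of_finite
  rw [measureReal_bind_singleton] at hpos ⊢
  rw [integral_const_mul]
  refine mul_le_mul_of_nonneg_left ?_ (hP ω).le
  simp only [log_div (hP ω).ne' (hκ _ ω).ne', log_div (hP ω).ne' hpos.ne']
  rw [integral_sub (integrable_const _) Integrable.of_finite, integral_const]
  simp only [probReal_univ, one_smul]
  linarith

end DiscreteKL

lemma discreteKL_pi {ι : Type*} [Fintype ι] [DecidableEq ι] {α : ι → Type*}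
    [∀ i, Fintype (α i)] [∀ i, MeasurableSpace (α i)] [∀ i, MeasurableSingletonClass (α i)]
    (μ ν : ∀ i, Measure (α i)) [∀ i, IsProbabilityMeasure (μ i)]
    [∀ i, IsProbabilityMeasure (ν i)] (hμ : ∀ i a, 0 < (μ i).real {a})
    (hν : ∀ i a, 0 < (ν i).real {a}) :
    discreteKL (Measure.pi μ) (Measure.pi ν) = ∑ i, discreteKL (μ i) (ν i) := by
  set φ : ∀ i, α i → ℝ := fun i a => log ((μ i).real {a} / (ν i).real {a})
  have hlog : ∀ g : ∀ i, α i,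
      log ((Measure.pi μ).real {g} / (Measure.pi ν).real {g}) = ∑ i, φ i (g i) := fun g => by
    rw [measureReal_pi_singleton, measureReal_pi_singleton, ← prod_div_distrib,
      log_prod fun i _ => (div_pos (hμ i _) (hν i _)).ne']
  have hmarg : ∀ i, ∑ g : ∀ i, α i, (Measure.pi μ).real {g} * φ i (g i) = discreteKL (μ i) (ν i) :=
    fun i => by
      have h := integral_comp_eval (μ := μ) (i := i) (f := φ i)
        Measurable.of_discrete.aestronglyMeasurable
      rw [integral_fintype Integrable.of_finite, integral_fintype Integrable.of_finite] at h
      simp only [smul_eq_mul] at h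
      exact h
  simp only [discreteKL, hlog, mul_sum]
  rw [sum_comm]
  exact sum_congr rfl fun i _ => hmarg i

section Bernoulli

instance isProbabilityMeasure_bern (r : ℝ) : IsProbabilityMeasure (bern r) :=
  PMF.toMeasure.isProbabilityMeasure _

variable {r : ℝ}

lemma bern_real_singleton (hr : r ∈ Set.Icc (0 : ℝ) 1) (b : Bool) :
    (bern r).real {b} = cond b r (1 - r) := by
  rw [measureReal_def, bern, PMF.toMeasure_apply_singleton _ _ (measurableSet_singleton b)]
  change (cond b ((_ : NNReal) : ENNReal) (1 - _)).toReal = _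
  rw [min_eq_right (Real.toNNReal_le_one.2 hr.2)]
  cases b
  · simp [ENNReal.toReal_sub_of_le, hr.1, hr.2]
  · simp [hr.1]

lemma bern_real_singleton_pos (hr : r ∈ Set.Ioo (0 : ℝ) 1) (b : Bool) :
    0 < (bern r).real {b} := by
  rw [bern_real_singleton (Set.Ioo_subset_Icc_self hr)]
  cases b
  · exact sub_pos.2 hr.2
  · exact hr.1

lemma pi_bern_real_singleton_pos {ι : Type*} [Fintype ι] {r : ι → ℝ}
    (hr : ∀ e, r e ∈ Set.Ioo (0 : ℝ) 1) (g : ι → Bool) :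
    0 < (Measure.pi fun e => bern (r e)).real {g} := by
  rw [measureReal_pi_singleton]
  exact prod_pos fun e _ => bern_real_singleton_pos (hr e) (g e)

lemma integral_bern (hr : r ∈ Set.Icc (0 : ℝ) 1) (φ : Bool → ℝ) :
    ∫ b, φ b ∂bern r = r * φ true + (1 - r) * φ false := by
  rw [integral_fintype Integrable.of_finite, Fintype.sum_bool, bern_real_singleton hr,
    bern_real_singleton hr]
  simp only [cond_true, cond_false, smul_eq_mul]

lemma discreteKL_bern {a b : ℝ} (ha : a ∈ Set.Icc (0 : ℝ) 1) (hb : b ∈ Set.Icc (0 : ℝ) 1) :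
    discreteKL (bern a) (bern b) = bernoulliKL a b := by
  simp only [discreteKL, Fintype.sum_bool, bern_real_singleton ha, bern_real_singleton hb,
    cond_true, cond_false, bernoulliKL]

lemma eq_bern_of_measureReal_true (ν : Measure Bool) [IsProbabilityMeasure ν]
    (hr : r ∈ Set.Icc (0 : ℝ) 1) (h : ν.real {true} = r) : ν = bern r := by
  have hsum : ν.real {true} + ν.real {false} = 1 := by
    rw [← Fintype.sum_bool (fun b => ν.real {b}), sum_measureReal_singleton, coe_univ,
      probReal_univ]
  refine ext_iff_measureReal_singleton.2 fun b => ?_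
  rw [bern_real_singleton hr]
  cases b
  · simp only [cond_false]; linarith
  · exact h

lemma map_decide_eq_bern {α : Type*} [MeasurableSpace α] (μ : Measure α)
    [IsProbabilityMeasure μ] {P : α → Prop} [DecidablePred P] (hP : MeasurableSet {x | P x})
    (hr : r ∈ Set.Icc (0 : ℝ) 1) (h : μ {x | P x} = ENNReal.ofReal r) :
    μ.map (fun x => decide (P x)) = bern r := by
  have hmeas := measurable_decide hP
  have := Measure.isProbabilityMeasure_map (μ := μ) hmeas.aemeasurable
  refine eq_bern_of_measureReal_true _ hr ?_
  rw [map_measureReal_apply hmeas (measurableSet_singleton true), measureReal_def,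
    show (fun x => decide (P x)) ⁻¹' {true} = {x | P x} by ext; simp, h,
    ENNReal.toReal_ofReal hr.1]

end Bernoulli

lemma discreteKL_pi_bern_bind_le {ι : Type*} [Fintype ι] [DecidableEq ι] {p : ℝ}
    (hp : p ∈ Set.Ioo (0 : ℝ) 1) (ν : Measure (ι → Bool)) [IsProbabilityMeasure ν]
    (hν : ∀ e, ν.map (fun S => S e) = bern p) (ρ : Bool → ℝ)
    (hρ : ∀ b, ρ b ∈ Set.Ioo (0 : ℝ) 1) :
    discreteKL (Measure.pi fun _ : ι => bern p)
        (ν.bind fun S => Measure.pi fun e => bern (ρ (S e)))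
      ≤ Fintype.card ι * (p * bernoulliKL p (ρ true) + (1 - p) * bernoulliKL p (ρ false)) := by
  calc _ ≤ ∫ S, discreteKL (Measure.pi fun _ : ι => bern p)
          (Measure.pi fun e => bern (ρ (S e))) ∂ν :=
        discreteKL_bind_le _ _ _ (pi_bern_real_singleton_pos fun _ => hp)
          fun S => pi_bern_real_singleton_pos fun e => hρ (S e)
    _ = ∑ e, ∫ S, bernoulliKL p (ρ (S e)) ∂ν := by
        rw [← integral_finsetSum _ fun e _ => Integrable.of_finite]
        refine integral_congr_ae (ae_of_all _ fun S => ?_)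
        dsimp only
        rw [discreteKL_pi _ _ (fun _ => bern_real_singleton_pos hp)
          fun e => bern_real_singleton_pos (hρ (S e))]
        exact sum_congr rfl fun e _ => discreteKL_bern (Set.Ioo_subset_Icc_self hp)
          (Set.Ioo_subset_Icc_self (hρ (S e)))
    _ = ∑ _e : ι, (p * bernoulliKL p (ρ true) + (1 - p) * bernoulliKL p (ρ false)) := by
        refine sum_congr rfl fun e _ => ?_
        have h := integral_map (μ := ν) (φ := fun S : ι → Bool => S e)
          (f := fun b => bernoulliKL p (ρ b)) Measurable.of_discrete.aemeasurable
          Measurable.of_discrete.aestronglyMeasurable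
        rw [hν e, integral_bern (Set.Ioo_subset_Icc_self hp)] at h
        exact h.symm
    _ = _ := by rw [sum_const, card_univ, nsmul_eq_mul]

instance isProbabilityMeasure_uniformSphere (d : ℕ) : IsProbabilityMeasure (uniformSphere d) :=
  Measure.isProbabilityMeasure_map (by fun_prop)

noncomputable def thresholdPattern (n d : ℕ) (t : ℝ) (X : Fin n → Fin d → ℝ) :
    EdgeIdx n → Bool :=
  fun e => decide (t ≤ ∑ i, X e.1.1 i * X e.1.2 i)

lemma measurableSet_le_inner {ι : Type*} (t : ℝ) (i j : ι) (d : ℕ) :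
    MeasurableSet {X : ι → Fin d → ℝ | t ≤ ∑ k, X i k * X j k} :=
  measurableSet_le measurable_const (by fun_prop)

lemma measurable_thresholdPattern (n d : ℕ) (t : ℝ) : Measurable (thresholdPattern n d t) :=
  measurable_pi_lambda _ fun e => measurable_decide (measurableSet_le_inner t e.1.1 e.1.2 d)

lemma noisyRGG_eq_bind (n d : ℕ) (p q t : ℝ) :
    noisyRGG n d p q t = ((Measure.pi fun _ : Fin n => uniformSphere d).map
      (thresholdPattern n d t)).bind fun S =>
        Measure.pi fun e => bern ((1 - q) * p + q * if S e then 1 else 0) := by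
  rw [Measure.bind_map_eq _ (measurable_thresholdPattern n d t) Measurable.of_discrete]
  simp [noisyRGG, thresholdPattern, Function.comp_def]

lemma map_eval_thresholdPattern {n d : ℕ} {p t : ℝ} (hp : p ∈ Set.Icc (0 : ℝ) 1)
    (ht : ((uniformSphere d).prod (uniformSphere d)) {x | t ≤ ∑ i, x.1 i * x.2 i}
      = ENNReal.ofReal p) (e : EdgeIdx n) :
    ((Measure.pi fun _ : Fin n => uniformSphere d).map (thresholdPattern n d t)).map
      (fun S => S e) = bern p := by
  rw [Measure.map_map (measurable_pi_apply e) (measurable_thresholdPattern n d t)]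
  refine map_decide_eq_bern _ (measurableSet_le_inner t e.1.1 e.1.2 d) hp ?_
  rw [← ht, ← Measure.map_pi_pair_eq_prod _ e.2.ne, Measure.map_apply (by fun_prop)
    (measurableSet_le measurable_const (by fun_prop))]
  rfl

lemma two_mul_card_edgeIdx_le (n : ℕ) : 2 * (Fintype.card (EdgeIdx n) : ℝ) ≤ n ^ 2 := by
  have h := Nat.choose_le_pow_div (α := ℝ) 2 n
  rw [Fintype.card_subtype, Fintype.card_product_filter_lt, Fintype.card_fin]
  norm_num at h
  linarith

theorem tv_erdosRenyi_noisyRGG_le_general (n d : ℕ) (p q t : ℝ)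
    (hp : p ∈ Set.Ioo (0 : ℝ) 1) (hq0 : 0 ≤ q) (hq : q ≤ 1 / 2)
    (ht : ((uniformSphere d).prod (uniformSphere d)) {x | t ≤ ∑ i, x.1 i * x.2 i}
      = ENNReal.ofReal p) :
    tvDist (erdosRenyi n p) (noisyRGG n d p q t) ≤ n * q / 2 := by
  obtain ⟨hp0, hp1⟩ := hp
  set ν := (Measure.pi fun _ : Fin n => uniformSphere d).map (thresholdPattern n d t)
  have : IsProbabilityMeasure ν :=
    Measure.isProbabilityMeasure_map (measurable_thresholdPattern n d t).aemeasurable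
  set ρ : Bool → ℝ := fun b => (1 - q) * p + q * if b then 1 else 0
  have hρ : ∀ b, ρ b ∈ Set.Ioo (0 : ℝ) 1 := by
    intro b; cases b <;> constructor <;> simp [ρ] <;> nlinarith
  have hKL := discreteKL_pi_bern_bind_le ⟨hp0, hp1⟩ ν
    (map_eval_thresholdPattern ⟨hp0.le, hp1.le⟩ ht) ρ hρ
  simp only [ρ, if_true, Bool.false_eq_true, if_false, mul_one, mul_zero, add_zero] at hKL
  have hedge := bernoulliKL_mixture_le ⟨hp0, hp1⟩ hq0 hq
  rw [erdosRenyi, noisyRGG_eq_bind]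
  have := isProbabilityMeasure_bind (m := ν) (f := fun S => Measure.pi fun e => bern (ρ (S e)))
    Measurable.of_discrete.aemeasurable (ae_of_all _ fun _ => inferInstance)
  calc _ ≤ √(discreteKL _ _ / 2) := tvDist_le_sqrt_discreteKL _ _
        (pi_bern_real_singleton_pos fun _ => ⟨hp0, hp1⟩)
        fun g => measureReal_bind_singleton_pos ν _ fun S =>
          pi_bern_real_singleton_pos (fun e => hρ (S e)) g
    _ ≤ √((n * q / 2) ^ 2) := by
        gcongr
        nlinarith [two_mul_card_edgeIdx_le n, mul_le_mul_of_nonneg_left hedge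
          (Nat.cast_nonneg (α := ℝ) (Fintype.card (EdgeIdx n))), sq_nonneg q]
    _ = n * q / 2 := sqrt_sq (by positivity)

/-- For fixed `p ∈ (0,1)`, `d ≥ 1` and `0 ≤ q ≤ 1/2`, with the threshold `t = t_{p,d}`
defined by `P(⟨x₁,x₂⟩ ≥ t) = p`, we have `TV(G(n,p), G(n,p,d,q)) ≤ nq/2`. -/
theorem tv_erdosRenyi_noisyRGG_le (n d : ℕ) (hd : 1 ≤ d) (p q t : ℝ)
    (hp : p ∈ Set.Ioo (0 : ℝ) 1) (hq0 : 0 ≤ q) (hq : q ≤ 1 / 2)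
    (ht : ((uniformSphere d).prod (uniformSphere d)) {x | t ≤ ∑ i, x.1 i * x.2 i}
      = ENNReal.ofReal p) :
    tvDist (erdosRenyi n p) (noisyRGG n d p q t) ≤ n * q / 2 :=
  tv_erdosRenyi_noisyRGG_le_general n d p q t hp hq0 hq ht
end
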